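/- Let I be the shot-noise interference of a planar PPP with intensity λ_BS > 0, Rayleigh fading, pathloss g(x) = β(1+x)^{-α} with α > 2, seen beyond radius r. Then its characteristic function B_I(iu) = exp(-2πλ_BS ∫_r^∞ x(1 - 1/(1 - iuTP₀g(x))) dx) satisfies |B_I(iu)| = O(e^{-c u^{2/α}}) as u → ±∞ for some c > 0; in particular B_I(iu) is absolutely integrable over u ∈ ℝ. -/

import Mathlib

/-!
Write `a_u(x) = u T P₀ β (1 + x)^{-α}`. Since `1 - 1/(1 - i a) = -i a/(1 - i a)` has real part
`a²/(1 + a²)` and modulus at most `|a|`, the exponent converges absolutely for `α > 2` and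
`|B_I(iu)| = exp(-2πλ ∫_r^∞ x a_u(x)²/(1 + a_u(x)²) dx) ≤ 1`. For `1 + x ≤ (T P₀ β |u|)^{1/α}`
the gain satisfies `|a_u(x)| ≥ 1`, so the integrand is at least `x/2` on an interval of length
of order `|u|^{1/α}`, and the exponent is at least a constant times `|u|^{2/α}`. This decay,
together with the bound `|B_I| ≤ 1`, makes `B_I` integrable.
-/

open MeasureTheory Real Filter Asymptotics Set

lemma one_sub_I_mul_ofReal_ne_zero (a : ℝ) : 1 - Complex.I * a ≠ 0 := by
  intro h
  simpa using congrArg Complex.re h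

lemma one_sub_one_div_one_sub_I_mul (a : ℝ) :
    1 - 1 / (1 - Complex.I * a) = -(Complex.I * a) / (1 - Complex.I * a) := by
  field_simp [one_sub_I_mul_ofReal_ne_zero a]
  ring

lemma re_one_sub_one_div_one_sub_I_mul (a : ℝ) :
    (1 - 1 / (1 - Complex.I * a)).re = a ^ 2 / (1 + a ^ 2) := by
  rw [one_sub_one_div_one_sub_I_mul]
  simp [Complex.div_re, Complex.normSq_apply]
  ring

lemma norm_one_sub_one_div_one_sub_I_mul_le (a : ℝ) :
    ‖1 - 1 / (1 - Complex.I * a)‖ ≤ |a| := by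
  have hden : 1 ≤ ‖1 - Complex.I * a‖ := by
    simpa using Complex.abs_re_le_norm (1 - Complex.I * a)
  rw [one_sub_one_div_one_sub_I_mul, norm_div, norm_neg, norm_mul, Complex.norm_I, one_mul,
    Complex.norm_real, Real.norm_eq_abs]
  exact div_le_self (abs_nonneg a) hden

lemma integrable_exp_neg_mul_abs_rpow {c p : ℝ} (hc : 0 < c) (hp : 0 < p) :
    Integrable fun u : ℝ => exp (-c * |u| ^ p) := by
  have hIoi : IntegrableOn (fun u : ℝ => exp (-c * |u| ^ p)) (Ioi 0) := by
    refine (integrableOn_rpow_mul_exp_neg_mul_rpow (s := 0) neg_one_lt_zero hp hc).congr_fun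
      (fun u hu => ?_) measurableSet_Ioi
    simp [abs_of_pos (mem_Ioi.mp hu)]
  rw [← integrableOn_univ, ← Iic_union_Ioi (a := (0 : ℝ)), integrableOn_union,
    integrableOn_Iic_iff_integrableOn_Iio]
  refine ⟨?_, hIoi⟩
  rw [← (Measure.measurePreserving_neg (volume : Measure ℝ)).integrableOn_comp_preimage
    (Homeomorph.neg ℝ).measurableEmbedding]
  simpa [Function.comp_def] using hIoi

section ShotNoise

variable {r : ℝ} {a : ℝ → ℝ}

lemma integrableOn_mul_one_sub_one_div_one_sub_I_mul (ha : Measurable a)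
    (h : IntegrableOn (fun x => x * a x) (Ioi r)) :
    IntegrableOn (fun x : ℝ => (x : ℂ) * (1 - 1 / (1 - Complex.I * a x))) (Ioi r) := by
  refine h.norm.mono' (by fun_prop) (ae_of_all _ fun x => ?_)
  rw [norm_mul, norm_mul, Complex.norm_real]
  exact mul_le_mul_of_nonneg_left (norm_one_sub_one_div_one_sub_I_mul_le _) (norm_nonneg _)

lemma re_setIntegral_mul_one_sub_one_div_one_sub_I_mul
    (h : IntegrableOn (fun x : ℝ => (x : ℂ) * (1 - 1 / (1 - Complex.I * a x))) (Ioi r)) :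
    (∫ x in Ioi r, (x : ℂ) * (1 - 1 / (1 - Complex.I * a x))).re =
      ∫ x in Ioi r, x * (a x ^ 2 / (1 + a x ^ 2)) := by
  rw [← RCLike.re_to_complex, ← integral_re h]
  congr 1 with x
  exact (Complex.re_ofReal_mul _ _).trans (congrArg _ (re_one_sub_one_div_one_sub_I_mul _))

lemma integrableOn_mul_sq_div_one_add_sq (ha : Measurable a)
    (h : IntegrableOn (fun x => x * a x) (Ioi r)) :
    IntegrableOn (fun x => x * (a x ^ 2 / (1 + a x ^ 2))) (Ioi r) :=
  IntegrableOn.congr_fun (integrableOn_mul_one_sub_one_div_one_sub_I_mul ha h).re (fun _ _ =>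
    (Complex.re_ofReal_mul _ _).trans (congrArg _ (re_one_sub_one_div_one_sub_I_mul _)))
    measurableSet_Ioi

lemma norm_exp_neg_mul_setIntegral_mul_one_sub_one_div_one_sub_I_mul (c : ℝ)
    (h : IntegrableOn (fun x : ℝ => (x : ℂ) * (1 - 1 / (1 - Complex.I * a x))) (Ioi r)) :
    ‖Complex.exp (-(c : ℂ) * ∫ x in Ioi r, (x : ℂ) * (1 - 1 / (1 - Complex.I * a x)))‖ =
      exp (-c * ∫ x in Ioi r, x * (a x ^ 2 / (1 + a x ^ 2))) := by
  rw [Complex.norm_exp, ← Complex.ofReal_neg, Complex.re_ofReal_mul,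
    re_setIntegral_mul_one_sub_one_div_one_sub_I_mul h]

lemma setIntegral_mul_sq_div_one_add_sq_nonneg (hr : 0 ≤ r) :
    0 ≤ ∫ x in Ioi r, x * (a x ^ 2 / (1 + a x ^ 2)) :=
  setIntegral_nonneg measurableSet_Ioi fun x hx => by
    have := hr.trans (le_of_lt hx)
    positivity

lemma sq_sub_sq_div_four_le_setIntegral_mul_sq_div_one_add_sq {s : ℝ} (hr : 0 ≤ r) (hrs : r ≤ s)
    (hint : IntegrableOn (fun x => x * (a x ^ 2 / (1 + a x ^ 2))) (Ioi r))
    (ha : ∀ x ∈ Ioc r s, 1 ≤ |a x|) :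
    (s ^ 2 - r ^ 2) / 4 ≤ ∫ x in Ioi r, x * (a x ^ 2 / (1 + a x ^ 2)) := by
  have hhalf : ∀ x ∈ Ioc r s, x * (1 / 2) ≤ x * (a x ^ 2 / (1 + a x ^ 2)) := fun x hx => by
    have hsq : 1 ≤ a x ^ 2 := by nlinarith [sq_abs (a x), ha x hx]
    have hx : 0 ≤ x := hr.trans hx.1.le
    refine mul_le_mul_of_nonneg_left ?_ hx
    rw [div_le_div_iff₀ two_pos (by positivity)]
    linarith
  calc (s ^ 2 - r ^ 2) / 4 = ∫ x in Ioc r s, x * (1 / 2) := by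
        rw [← intervalIntegral.integral_of_le hrs, intervalIntegral.integral_mul_const,
          integral_id]
        ring
    _ ≤ ∫ x in Ioc r s, x * (a x ^ 2 / (1 + a x ^ 2)) :=
        setIntegral_mono_on (Continuous.integrableOn_Ioc (by fun_prop))
          (hint.mono_set Ioc_subset_Ioi_self) measurableSet_Ioc hhalf
    _ ≤ ∫ x in Ioi r, x * (a x ^ 2 / (1 + a x ^ 2)) :=
        setIntegral_mono_set hint
          ((ae_restrict_iff' measurableSet_Ioi).mpr (ae_of_all _ fun x hx => by
            have := hr.trans (le_of_lt hx)
            positivity))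
          Ioc_subset_Ioi_self.eventuallyLE

end ShotNoise

lemma stronglyMeasurable_setIntegral_mul_one_sub_one_div_one_sub_I_mul (r : ℝ)
    {a : ℝ → ℝ → ℝ} (ha : Measurable (Function.uncurry a)) :
    StronglyMeasurable fun u => ∫ x in Ioi r, (x : ℂ) * (1 - 1 / (1 - Complex.I * a u x)) := by
  have : Measurable fun p : ℝ × ℝ => (p.2 : ℂ) * (1 - 1 / (1 - Complex.I * a p.1 p.2)) := by
    fun_prop
  exact this.stronglyMeasurable.integral_prod_right'

section Pathloss

variable {r α : ℝ}

lemma integrableOn_mul_mul_one_add_rpow_neg (hr : 0 ≤ r) (hα : 2 < α) (v : ℝ) :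
    IntegrableOn (fun x : ℝ => x * (v * (1 + x) ^ (-α))) (Ioi r) := by
  have hmaj : Integrable fun x : ℝ => (1 + ‖x‖) ^ (-(α - 1)) :=
    integrable_one_add_norm (by rw [Module.finrank_self]; push_cast; linarith)
  refine (hmaj.integrableOn.const_mul |v|).mono' (by fun_prop)
    ((ae_restrict_iff' measurableSet_Ioi).mpr (ae_of_all _ fun x hx => ?_))
  have hx : 0 < x := hr.trans_lt hx
  rw [norm_mul, norm_mul, Real.norm_eq_abs, Real.norm_eq_abs, Real.norm_eq_abs, abs_of_pos hx,
    abs_of_pos (by positivity : 0 < (1 + x) ^ (-α)), show -(α - 1) = 1 + -α by ring,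
    rpow_add (by linarith), rpow_one]
  have : 0 ≤ |v| * (1 + x) ^ (-α) := by positivity
  nlinarith

lemma one_le_abs_mul_one_add_rpow_neg {v x : ℝ} (hx : 0 ≤ x) (h : (1 + x) ^ α ≤ |v|) :
    1 ≤ |v * (1 + x) ^ (-α)| := by
  have hpos : 0 < (1 + x) ^ α := rpow_pos_of_pos (by linarith) α
  rwa [rpow_neg (by linarith), abs_mul, abs_inv, abs_of_pos hpos, ← div_eq_mul_inv,
    one_le_div hpos]

lemma exists_pos_eventually_le_setIntegral_pathloss (hr : 0 ≤ r) (hα : 2 < α) {κ : ℝ}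
    (hκ : 0 < κ) :
    ∃ c > 0, ∀ᶠ u in cocompact ℝ, c * |u| ^ (2 / α) ≤
      ∫ x in Ioi r,
        x * ((u * κ * (1 + x) ^ (-α)) ^ 2 / (1 + (u * κ * (1 + x) ^ (-α)) ^ 2)) := by
  have hα0 : 0 < α := by linarith
  refine ⟨κ ^ (2 / α) / 32, by positivity, ?_⟩
  have ht : Tendsto (fun u : ℝ => (κ * |u|) ^ α⁻¹) (cocompact ℝ) atTop :=
    (tendsto_rpow_atTop (inv_pos.mpr hα0)).comp
      (tendsto_norm_cocompact_atTop.const_mul_atTop hκ)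
  filter_upwards [ht.eventually_ge_atTop (2 + 4 * r)] with u hu
  set t := (κ * |u|) ^ α⁻¹ with ht_def
  have hκu : 0 ≤ κ * |u| := by positivity
  have hgain : ∀ x ∈ Ioc r (t - 1), 1 ≤ |u * κ * (1 + x) ^ (-α)| := fun x hx => by
    have hx0 : 0 ≤ x := hr.trans hx.1.le
    refine one_le_abs_mul_one_add_rpow_neg hx0 ?_
    calc (1 + x) ^ α ≤ t ^ α := rpow_le_rpow (by linarith) (by linarith [hx.2]) hα0.le
      _ = |u * κ| := by rw [ht_def, rpow_inv_rpow hκu hα0.ne', abs_mul, abs_of_pos hκ, mul_comm]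
  have hlow := sq_sub_sq_div_four_le_setIntegral_mul_sq_div_one_add_sq hr (by linarith)
    (integrableOn_mul_sq_div_one_add_sq (by fun_prop)
      (integrableOn_mul_mul_one_add_rpow_neg hr hα (u * κ))) hgain
  have ht2 : t ^ 2 = κ ^ (2 / α) * |u| ^ (2 / α) := by
    rw [ht_def, ← rpow_natCast, ← rpow_mul hκu, mul_rpow hκ.le (abs_nonneg u)]
    norm_num [div_eq_inv_mul]
  calc κ ^ (2 / α) / 32 * |u| ^ (2 / α) = t ^ 2 / 32 := by rw [ht2]; ring
    -- `t ≥ 2 + 4 r` gives `t - 1 ≥ t / 2` and `t - 1 ≥ 2 r`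
    _ ≤ ((t - 1) ^ 2 - r ^ 2) / 4 := by nlinarith
    _ ≤ _ := hlow

end Pathloss

/-- `u ↦ B_I(iu)`, with `c = 2πλ_BS` and `κ = T P₀ β`. -/
noncomputable def interferenceCharFun (c κ α r u : ℝ) : ℂ :=
  Complex.exp (-(c : ℂ) *
    ∫ x in Ioi r, (x : ℂ) * (1 - 1 / (1 - Complex.I * (u * κ * (1 + x) ^ (-α) : ℝ))))

section InterferenceCharFun

variable {c κ α r : ℝ}

lemma norm_interferenceCharFun (hr : 0 ≤ r) (hα : 2 < α) (u : ℝ) :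
    ‖interferenceCharFun c κ α r u‖ = exp (-c * ∫ x in Ioi r,
      x * ((u * κ * (1 + x) ^ (-α)) ^ 2 / (1 + (u * κ * (1 + x) ^ (-α)) ^ 2))) :=
  norm_exp_neg_mul_setIntegral_mul_one_sub_one_div_one_sub_I_mul c
    (integrableOn_mul_one_sub_one_div_one_sub_I_mul (by fun_prop)
      (integrableOn_mul_mul_one_add_rpow_neg hr hα (u * κ)))

lemma norm_interferenceCharFun_le_one (hc : 0 ≤ c) (hr : 0 ≤ r) (hα : 2 < α) (u : ℝ) :
    ‖interferenceCharFun c κ α r u‖ ≤ 1 := by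
  rw [norm_interferenceCharFun hr hα, exp_le_one_iff, neg_mul, neg_nonpos]
  exact mul_nonneg hc (setIntegral_mul_sq_div_one_add_sq_nonneg hr)

lemma measurable_interferenceCharFun : Measurable (interferenceCharFun c κ α r) :=
  Complex.measurable_exp.comp <| measurable_const.mul <|
    (stronglyMeasurable_setIntegral_mul_one_sub_one_div_one_sub_I_mul r
      (a := fun u x => u * κ * (1 + x) ^ (-α)) (by fun_prop)).measurable

lemma exists_pos_isBigO_interferenceCharFun (hc : 0 < c) (hκ : 0 < κ) (hr : 0 ≤ r)
    (hα : 2 < α) :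
    ∃ c' > 0, (fun u => ‖interferenceCharFun c κ α r u‖) =O[cocompact ℝ]
      fun u => exp (-c' * |u| ^ (2 / α)) := by
  obtain ⟨c₀, hc₀, hgrowth⟩ := exists_pos_eventually_le_setIntegral_pathloss hr hα hκ
  refine ⟨c * c₀, by positivity, IsBigO.of_bound 1 (hgrowth.mono fun u hu => ?_)⟩
  rw [norm_norm, norm_interferenceCharFun hr hα, Real.norm_of_nonneg (exp_pos _).le, one_mul,
    exp_le_exp, neg_mul, neg_mul, neg_le_neg_iff, mul_assoc]
  exact mul_le_mul_of_nonneg_left hu hc.le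

lemma integrable_interferenceCharFun (hc : 0 < c) (hκ : 0 < κ) (hr : 0 ≤ r) (hα : 2 < α) :
    Integrable (interferenceCharFun c κ α r) := by
  obtain ⟨c', hc', hdecay⟩ := exists_pos_isBigO_interferenceCharFun hc hκ hr hα
  have hbdd : ∀ u, ‖interferenceCharFun c κ α r u‖ ≤ ‖(1 : ℝ)‖ := fun u => by
    rw [norm_one]
    exact norm_interferenceCharFun_le_one hc.le hr hα u
  have hloc : LocallyIntegrable (interferenceCharFun c κ α r) :=
    (locallyIntegrable_const (1 : ℝ)).mono measurable_interferenceCharFun.aestronglyMeasurable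
      (ae_of_all _ hbdd)
  exact hloc.integrable_of_isBigO_cocompact (isBigO_norm_left.mp hdecay)
    ((integrable_exp_neg_mul_abs_rpow hc' (by positivity)).integrableAtFilter _)

end InterferenceCharFun

/-- The characteristic function of the Poisson shot-noise interference seen beyond radius `r`
with Rayleigh fading and pathloss `g(x) = β(1+x)^(-α)`, `α > 2`, decays like
`O(exp(-c u^(2/α)))` as `u → ±∞` for some `c > 0`; in particular it is absolutely
integrable over `ℝ`. -/
theorem interference_char_fun_decay
    (lam T P0 α β r : ℝ) (hlam : 0 < lam) (hα : 2 < α) (hβ : 0 < β) (hT : 0 < T)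
    (hP0 : 0 < P0) (hr : 0 ≤ r)
    (g : ℝ → ℝ) (hg : ∀ x, g x = β * (1 + x) ^ (-α))
    (B : ℝ → ℂ)
    (hB : ∀ u : ℝ, B u = Complex.exp (-(2 * Real.pi * lam) *
      ∫ x in Set.Ioi r, (x : ℂ) * (1 - 1 / (1 - Complex.I * u * T * P0 * (g x))))) :
    (∃ c > 0, (fun u : ℝ => ‖B u‖) =O[cocompact ℝ]
        fun u : ℝ => Real.exp (-c * |u| ^ (2 / α))) ∧
      Integrable B := by
  have hB' : B = interferenceCharFun (2 * π * lam) (T * P0 * β) α r := by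
    ext u
    simp only [hB, hg, interferenceCharFun]
    push_cast
    ring_nf
  have hc : 0 < 2 * π * lam := by positivity
  have hκ : 0 < T * P0 * β := by positivity
  subst hB'
  exact ⟨exists_pos_isBigO_interferenceCharFun hc hκ hr hα,
    integrable_interferenceCharFun hc hκ hr hα⟩
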